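/- arXiv:1607.08571 — 2 statements merged into one kernel-verified Lean document; each statement's English description precedes it below -/
import Mathlib

section
/- Let α be irrational, θ ∈ ℝ, and ε₀ > 0. Suppose k is an ε₀-resonance of θ, i.e. ‖2θ − kα‖ ≤ e^{−ε₀|k|} and ‖2θ − kα‖ = min_{|l| ≤ |k|} ‖2θ − lα‖. If ξ > 0 satisfies 1000ξ < ε₀ and for all nonzero integers m one has ‖mα‖ ≥ 2 e^{−2ξ|m|}, then any two consecutive ε₀-resonances n_j, n_{j+1} of θ with |n_{j+1}| sufficiently large satisfy |n_{j+1}| ≥ (ε₀/(4ξ)) |n_j|. -/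
/-- Distance from a real number to the nearest integer. -/
noncomputable def distZ (x : ℝ) : ℝ := |x - round x|

/-- `k` is an `ε₀`-resonance of `θ` (with respect to the frequency `α`). -/
def IsResonance (α θ ε₀ : ℝ) (k : ℤ) : Prop :=
  distZ (2 * θ - (k : ℝ) * α) ≤ Real.exp (-ε₀ * |(k : ℝ)|) ∧
  ∀ l : ℤ, |l| ≤ |k| → distZ (2 * θ - (k : ℝ) * α) ≤ distZ (2 * θ - (l : ℝ) * α)

lemma distZ_sub_le (x y : ℝ) : distZ (x - y) ≤ distZ x + distZ y := by
  have h := round_le (x - y) (round x - round y)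
  unfold distZ
  refine h.trans ?_
  push_cast
  have : x - y - ((round x : ℝ) - round y) = (x - round x) - (y - round y) := by ring
  rw [this]
  exact (abs_sub _ _)

theorem stmt4 (α θ ε₀ ξ : ℝ) (hα : Irrational α) (hε₀ : 0 < ε₀) (hξ : 0 < ξ)
    (hξε : 1000 * ξ < ε₀)
    (hdio : ∀ m : ℤ, m ≠ 0 → 2 * Real.exp (-2 * ξ * |(m : ℝ)|) ≤ distZ ((m : ℝ) * α)) :
    ∃ N : ℕ, ∀ nj nj1 : ℤ, IsResonance α θ ε₀ nj → IsResonance α θ ε₀ nj1 →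
      |nj| < |nj1| → (N : ℤ) ≤ |nj1| →
      (ε₀ / (4 * ξ)) * |(nj : ℝ)| ≤ |(nj1 : ℝ)| := by
  refine ⟨0, fun nj nj1 hj hj1 hlt _ => ?_⟩
  set m : ℤ := nj1 - nj with hm
  have hmne : m ≠ 0 := sub_ne_zero.mpr (by rintro rfl; exact lt_irrefl _ hlt)
  have key : 2 * Real.exp (-2 * ξ * |(m : ℝ)|) ≤ 2 * Real.exp (-ε₀ * |(nj : ℝ)|) := by
    have h1 := hdio m hmne
    have h2 : distZ ((m : ℝ) * α) ≤ distZ (2 * θ - (nj : ℝ) * α) + distZ (2 * θ - (nj1 : ℝ) * α) := by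
      have : (m : ℝ) * α = (2 * θ - (nj : ℝ) * α) - (2 * θ - (nj1 : ℝ) * α) := by
        push_cast [hm]; ring
      rw [this]; exact distZ_sub_le _ _
    have h3 : distZ (2 * θ - (nj1 : ℝ) * α) ≤ distZ (2 * θ - (nj : ℝ) * α) :=
      hj1.2 nj hlt.le
    have h4 := hj.1
    linarith
  have hexp : -2 * ξ * |(m : ℝ)| ≤ -ε₀ * |(nj : ℝ)| := by
    have hk : Real.exp (-2 * ξ * |(m : ℝ)|) ≤ Real.exp (-ε₀ * |(nj : ℝ)|) := by linarith
    exact Real.exp_le_exp.mp hk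
  have habs : |(m : ℝ)| ≤ 2 * |(nj1 : ℝ)| := by
    have h1 : |(m : ℝ)| ≤ |(nj1 : ℝ)| + |(nj : ℝ)| := by
      push_cast [hm]; exact abs_sub _ _
    have h2 : |(nj : ℝ)| ≤ |(nj1 : ℝ)| := by exact_mod_cast hlt.le
    linarith
  have : ε₀ * |(nj : ℝ)| ≤ 4 * ξ * |(nj1 : ℝ)| := by nlinarith
  rw [div_mul_eq_mul_div, div_le_iff₀ (by linarith)]
  linarith
end

section
/- (Jensen-type integral) For every y ∈ ℂ, ∫₀¹ ln|e^{2πix} − y| dx = max(ln|y|, 0). -/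
open Real

theorem intervalIntegral_comp_exp_two_pi_mul_I_eq_circleAverage {E : Type*}
    [NormedAddCommGroup E] [NormedSpace ℝ E] (f : ℂ → E) :
    ∫ x in (0 : ℝ)..1, f (Complex.exp (2 * π * Complex.I * x)) = circleAverage f 0 1 := by
  have h := intervalIntegral.integral_comp_mul_left (a := 0) (b := 1)
    (fun θ : ℝ => f (circleMap 0 1 θ)) two_pi_pos.ne'
  rw [mul_zero, mul_one] at h
  rw [circleAverage_def, ← h]
  refine intervalIntegral.integral_congr fun x _ => ?_
  simp only [circleMap_zero, Complex.ofReal_one, one_mul]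
  congr 2
  push_cast
  ring

theorem stmt15 (y : ℂ) :
    (∫ x in (0 : ℝ)..1,
      Real.log (‖Complex.exp (2 * π * Complex.I * x) - y‖)) =
      max (Real.log (‖y‖)) 0 := by
  rw [intervalIntegral_comp_exp_two_pi_mul_I_eq_circleAverage (fun z => Real.log ‖z - y‖),
    circleAverage_log_norm_sub_const_eq_posLog, posLog_apply, max_comm]
end
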